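/- arXiv:2407.06386 — 5 statements merged into one kernel-verified Lean document; each statement's English description precedes it below -/
import Mathlib

section
/- Let h : ℝ≥0 × ℝ≥0 → ℝ be measurable with |h(s,a)| ≤ M for all (s,a). Then for every n ≥ 0 and all t, x ≥ 0 one has |Jₙh(t,x)| ≤ (M·t·x)ⁿ / (n!)². Consequently the series Σ_{n=0}^∞ Jₙh(t,x) converges absolutely for every (t,x). -/
open MeasureTheory intervalIntegral

/-- The iterated Volterra operators `Jₙh` on the nonnegative quadrant:
`J₀h(t,x) = 1` and `J_{n+1}h(t,x) = ∫₀ᵗ∫₀ˣ h(s,a) · Jₙh(s,a) da ds`. -/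
noncomputable def J (h : ℝ × ℝ → ℝ) : ℕ → ℝ × ℝ → ℝ
  | 0 => fun _ => 1
  | n + 1 => fun p => ∫ s in (0:ℝ)..p.1, ∫ a in (0:ℝ)..p.2, h (s, a) * J h n (s, a)

/-! Each application of the Volterra operator integrates a bound `C sⁿ aⁿ` over the rectangle
`[0,t] × [0,x]`, producing `C (t x)ⁿ⁺¹ / (n+1)²`; by induction the constants multiply to
`Mⁿ / (n!)²`. Summability follows by comparison with the exponential series. -/

theorem abs_intervalIntegral_le_mul_pow_div {f : ℝ → ℝ} {C x : ℝ} (n : ℕ) (hx : 0 ≤ x)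
    (hf : ∀ a ∈ Set.Ioc 0 x, |f a| ≤ C * a ^ n) :
    |∫ a in (0:ℝ)..x, f a| ≤ C * (x ^ (n + 1) / (n + 1)) := by
  have hbound := norm_integral_le_of_norm_le (μ := volume) (f := f) (g := fun a => C * a ^ n) hx
    (.of_forall hf)
    ((continuous_const.mul (continuous_pow n)).intervalIntegrable 0 x)
  simpa [intervalIntegral.integral_const_mul, integral_pow] using hbound

theorem abs_J_le {h : ℝ × ℝ → ℝ} {M : ℝ}
    (hbd : ∀ s a : ℝ, 0 ≤ s → 0 ≤ a → |h (s, a)| ≤ M) (n : ℕ) {t x : ℝ}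
    (ht : 0 ≤ t) (hx : 0 ≤ x) :
    |J h n (t, x)| ≤ (M * t * x) ^ n / (n.factorial : ℝ) ^ 2 := by
  induction n generalizing t x with
  | zero => simp [J]
  | succ n ih =>
    have hM : 0 ≤ M := (abs_nonneg _).trans (hbd 0 0 le_rfl le_rfl)
    set C : ℝ := M ^ (n + 1) / (n.factorial : ℝ) ^ 2
    have inner : ∀ s ∈ Set.Ioc 0 t, |∫ a in (0:ℝ)..x, h (s, a) * J h n (s, a)| ≤
        C * (x ^ (n + 1) / (n + 1)) * s ^ n := by
      rintro s ⟨hs, -⟩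
      have hrow := abs_intervalIntegral_le_mul_pow_div (C := C * s ^ n) n hx fun a ⟨ha, _⟩ =>
        calc |h (s, a) * J h n (s, a)| = |h (s, a)| * |J h n (s, a)| := abs_mul _ _
          _ ≤ M * ((M * s * a) ^ n / (n.factorial : ℝ) ^ 2) :=
            mul_le_mul (hbd s a hs.le ha.le) (ih hs.le ha.le) (abs_nonneg _) hM
          _ = C * s ^ n * a ^ n := by ring
      linarith
    calc |J h (n + 1) (t, x)|
        ≤ C * (x ^ (n + 1) / (n + 1)) * (t ^ (n + 1) / (n + 1)) :=
          abs_intervalIntegral_le_mul_pow_div n ht inner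
      _ = (M * t * x) ^ (n + 1) / ((n + 1).factorial : ℝ) ^ 2 := by
          rw [Nat.factorial_succ]
          push_cast [C]
          field_simp
          ring

theorem summable_pow_div_factorial_sq (c : ℝ) :
    Summable fun n : ℕ => c ^ n / (n.factorial : ℝ) ^ 2 := by
  refine (Real.summable_pow_div_factorial |c|).of_norm_bounded fun n => ?_
  have hfact : (1 : ℝ) ≤ n.factorial := by exact_mod_cast n.factorial_pos
  rw [norm_div, norm_pow, Real.norm_eq_abs, norm_pow, Real.norm_natCast]
  gcongr
  nlinarith

theorem volterra_iterates_bound_general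
    (h : ℝ × ℝ → ℝ) (M : ℝ)
    (hbd : ∀ s a : ℝ, 0 ≤ s → 0 ≤ a → |h (s, a)| ≤ M) :
    ∀ t x : ℝ, 0 ≤ t → 0 ≤ x →
      (∀ n : ℕ, |J h n (t, x)| ≤ (M * t * x) ^ n / (n.factorial : ℝ) ^ 2) ∧
      Summable (fun n : ℕ => |J h n (t, x)|) := by
  intro t x ht hx
  have hJ (n : ℕ) := abs_J_le hbd n ht hx
  exact ⟨hJ, .of_nonneg_of_le (fun _ => abs_nonneg _) hJ (summable_pow_div_factorial_sq _)⟩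

/-- For bounded measurable `h`, one has `|Jₙh(t,x)| ≤ (M·t·x)ⁿ / (n!)²` for all `n` and
all `t,x ≥ 0`, and consequently the series `Σₙ Jₙh(t,x)` converges absolutely. -/
theorem volterra_iterates_bound
    (h : ℝ × ℝ → ℝ) (M : ℝ) (hmeas : Measurable h)
    (hbd : ∀ s a : ℝ, 0 ≤ s → 0 ≤ a → |h (s, a)| ≤ M) :
    ∀ t x : ℝ, 0 ≤ t → 0 ≤ x →
      (∀ n : ℕ, |J h n (t, x)| ≤ (M * t * x) ^ n / (n.factorial : ℝ) ^ 2) ∧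
      Summable (fun n : ℕ => |J h n (t, x)|) :=
  volterra_iterates_bound_general h M hbd
end

section
/- Suppose h : ℝ≥0 × ℝ≥0 → ℝ has the separable form h(t,x) = f(t)·g(x), where f, g : ℝ≥0 → ℝ are measurable, bounded functions. Then for every n ≥ 0 and all t, x ≥ 0, the iterated Volterra operator satisfies the closed formula Jₙh(t,x) = (1/(n!)²) · (∫₀ᵗ f(s) ds)ⁿ · (∫₀ˣ g(a) da)ⁿ. -/
/-!
By induction on `n`, `J_{n+1}h(t,x)` splits into the product of `∫₀ᵗ f Fⁿ` and `∫₀ˣ g Gⁿ`, where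
`F`, `G` are the primitives of `f`, `g`. Each factor equals `(primitive)ⁿ⁺¹ / (n + 1)` by the
fundamental theorem of calculus for the absolutely continuous function `Gⁿ⁺¹`, whose derivative is
`(n + 1) Gⁿ g` almost everywhere by Lebesgue differentiation.
-/

open MeasureTheory intervalIntegral

open Set

theorem AbsolutelyContinuousOnInterval.fun_pow {f : ℝ → ℝ} {a b : ℝ}
    (hf : AbsolutelyContinuousOnInterval f a b) (n : ℕ) :
    AbsolutelyContinuousOnInterval (fun x ↦ f x ^ n) a b := by
  induction n with
  | zero =>
    simpa using (LipschitzWith.const (1 : ℝ)).lipschitzOnWith.absolutelyContinuousOnInterval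
  | succ n ih =>
    convert ih.fun_mul hf using 1
    ext x
    ring

theorem integral_mul_primitive_pow {g : ℝ → ℝ} {a b : ℝ} (hg : IntervalIntegrable g volume a b)
    (n : ℕ) :
    ∫ y in a..b, g y * (∫ z in a..y, g z) ^ n = (∫ y in a..b, g y) ^ (n + 1) / (n + 1) := by
  set G : ℝ → ℝ := fun y ↦ ∫ z in a..y, g z
  have hG : AbsolutelyContinuousOnInterval G a b :=
    hg.absolutelyContinuousOnInterval_intervalIntegral left_mem_uIcc
  have hderiv : ∀ᵐ y, y ∈ uIoc a b →
      deriv (fun y ↦ G y ^ (n + 1)) y = (n + 1) * (g y * G y ^ n) := by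
    filter_upwards [hg.ae_hasDerivAt_integral] with y hy hyab
    rw [((hy (uIoc_subset_uIcc hyab) a left_mem_uIcc).fun_pow (n + 1)).deriv]
    push_cast
    ring
  have hFTC : ∫ y in a..b, deriv (fun y ↦ G y ^ (n + 1)) y = G b ^ (n + 1) := by
    simp [(hG.fun_pow (n + 1)).integral_deriv_eq_sub, G]
  rw [integral_congr_ae hderiv, intervalIntegral.integral_const_mul] at hFTC
  rw [eq_div_iff (by positivity), mul_comm]
  exact hFTC

theorem intervalIntegrable_of_abs_le {f : ℝ → ℝ} {M t : ℝ} (hf : Measurable f)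
    (hM : ∀ s, 0 ≤ s → |f s| ≤ M) (ht : 0 ≤ t) : IntervalIntegrable f volume 0 t := by
  rw [intervalIntegrable_iff_integrableOn_Ioc_of_le ht]
  refine Measure.integrableOn_of_bounded measure_Ioc_lt_top.ne hf.aestronglyMeasurable
    (M := M) ?_
  filter_upwards [ae_restrict_mem measurableSet_Ioc] with s hs
  exact hM s hs.1.le

/-- If `h(t,x) = f(t)·g(x)` is separable with `f, g` measurable and bounded, then
`Jₙh(t,x) = (1/(n!)²) · (∫₀ᵗ f)ⁿ · (∫₀ˣ g)ⁿ`. -/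
theorem volterra_iterates_separable
    (f g : ℝ → ℝ) (Mf Mg : ℝ)
    (hfmeas : Measurable f) (hgmeas : Measurable g)
    (hfbd : ∀ s : ℝ, 0 ≤ s → |f s| ≤ Mf) (hgbd : ∀ a : ℝ, 0 ≤ a → |g a| ≤ Mg)
    (h : ℝ × ℝ → ℝ) (hsep : ∀ t x : ℝ, h (t, x) = f t * g x) :
    ∀ (n : ℕ) (t x : ℝ), 0 ≤ t → 0 ≤ x →
      J h n (t, x) = (1 / (n.factorial : ℝ) ^ 2)
        * (∫ s in (0:ℝ)..t, f s) ^ n * (∫ a in (0:ℝ)..x, g a) ^ n := by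
  intro n
  induction n with
  | zero => intro t x _ _; simp [J]
  | succ n ih =>
    intro t x ht hx
    set F : ℝ → ℝ := fun t ↦ ∫ s in (0:ℝ)..t, f s
    set G : ℝ → ℝ := fun x ↦ ∫ a in (0:ℝ)..x, g a
    have hJ : J h (n + 1) (t, x) = (1 / (n.factorial : ℝ) ^ 2) *
        ((∫ s in (0:ℝ)..t, f s * F s ^ n) * ∫ a in (0:ℝ)..x, g a * G a ^ n) := by
      rw [← intervalIntegral.integral_mul_const, ← intervalIntegral.integral_const_mul]
      refine integral_congr fun s hs ↦ ?_
      rw [← intervalIntegral.integral_const_mul, ← intervalIntegral.integral_const_mul]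
      refine integral_congr fun a ha ↦ ?_
      rw [uIcc_of_le ht] at hs
      rw [uIcc_of_le hx] at ha
      simp only [hsep, ih s a hs.1 ha.1, F, G]
      ring
    rw [hJ, integral_mul_primitive_pow (intervalIntegrable_of_abs_le hfmeas hfbd ht),
      integral_mul_primitive_pow (intervalIntegrable_of_abs_le hgmeas hgbd hx),
      Nat.factorial_succ]
    push_cast
    field_simp
end

section
/- (Two-parameter Gronwall inequality.) Let T, X > 0, let a ≥ 0 and M ≥ 0, and let v : [0,T] × [0,X] → ℝ be continuous and nonnegative. If v(t,x) ≤ a + M · ∫₀ᵗ∫₀ˣ v(s,α) dα ds for all (t,x) ∈ [0,T] × [0,X], then v(t,x) ≤ a · Σ_{n=0}^∞ (M·t·x)ⁿ / (n!)² for all (t,x) ∈ [0,T] × [0,X]. -/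
/-!
A bound `B` for `v` on the rectangle is improved by iterating the monotone operator
`P w = a + M ∫₀ᵗ∫₀ˣ w`: since `M ∫₀ᵗ∫₀ˣ (M s α)ᵏ/(k!)² = (M t x)ᵏ⁺¹/((k+1)!)²`, the `n`-th iterate of
the constant `B` is `a ∑_{k<n} (M t x)ᵏ/(k!)² + B (M t x)ⁿ/(n!)²`, and the last term tends to `0`.
To integrate freely, `v` is first extended continuously to the plane by clamping to the rectangle.
-/

open MeasureTheory intervalIntegral Set Finset Nat Filter Topology

noncomputable def rectIntegral (f : ℝ × ℝ → ℝ) (t x : ℝ) : ℝ :=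
  ∫ s in (0:ℝ)..t, ∫ α in (0:ℝ)..x, f (s, α)

namespace rectIntegral

variable {f g : ℝ × ℝ → ℝ} {t x : ℝ}

theorem intervalIntegrable_slice (hf : Continuous f) (s x : ℝ) :
    IntervalIntegrable (fun α => f (s, α)) volume 0 x :=
  Continuous.intervalIntegrable (by fun_prop) _ _

theorem intervalIntegrable_integral_slice (hf : Continuous f) (t x : ℝ) :
    IntervalIntegrable (fun s => ∫ α in (0:ℝ)..x, f (s, α)) volume 0 t :=
  Continuous.intervalIntegrable (by fun_prop) _ _

theorem const_mul (c : ℝ) (f : ℝ × ℝ → ℝ) (t x : ℝ) :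
    rectIntegral (fun p => c * f p) t x = c * rectIntegral f t x := by
  simp only [rectIntegral, intervalIntegral.integral_const_mul]

theorem add (hf : Continuous f) (hg : Continuous g) (t x : ℝ) :
    rectIntegral (fun p => f p + g p) t x = rectIntegral f t x + rectIntegral g t x := by
  unfold rectIntegral
  rw [← integral_add (intervalIntegrable_integral_slice hf t x)
    (intervalIntegrable_integral_slice hg t x)]
  refine integral_congr fun s _ => ?_
  exact integral_add (intervalIntegrable_slice hf s x) (intervalIntegrable_slice hg s x)

theorem finsetSum {ι : Type*} (s : Finset ι) {f : ι → ℝ × ℝ → ℝ}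
    (hf : ∀ i ∈ s, Continuous (f i)) (t x : ℝ) :
    rectIntegral (fun p => ∑ i ∈ s, f i p) t x = ∑ i ∈ s, rectIntegral (f i) t x := by
  unfold rectIntegral
  rw [← integral_finsetSum fun i hi => intervalIntegrable_integral_slice (hf i hi) t x]
  refine integral_congr fun u _ => ?_
  exact integral_finsetSum fun i hi => intervalIntegrable_slice (hf i hi) u x

theorem congr (ht : 0 ≤ t) (hx : 0 ≤ x) (h : ∀ p ∈ Icc 0 t ×ˢ Icc 0 x, f p = g p) :
    rectIntegral f t x = rectIntegral g t x := by
  refine integral_congr fun s hs => integral_congr fun α hα => h (s, α) ⟨?_, ?_⟩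
  · rwa [uIcc_of_le ht] at hs
  · rwa [uIcc_of_le hx] at hα

theorem mono (hf : Continuous f) (hg : Continuous g) (ht : 0 ≤ t) (hx : 0 ≤ x)
    (h : ∀ p ∈ Icc 0 t ×ˢ Icc 0 x, f p ≤ g p) :
    rectIntegral f t x ≤ rectIntegral g t x :=
  integral_mono_on ht (intervalIntegrable_integral_slice hf t x)
    (intervalIntegrable_integral_slice hg t x) fun s hs =>
      integral_mono_on hx (intervalIntegrable_slice hf s x) (intervalIntegrable_slice hg s x)
        fun α hα => h (s, α) ⟨hs, hα⟩

end rectIntegral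

namespace TwoParamGronwall

noncomputable def term (M : ℝ) (n : ℕ) (p : ℝ × ℝ) : ℝ :=
  (M * p.1 * p.2) ^ n / (n ! : ℝ) ^ 2

noncomputable def bound (a B M : ℝ) (n : ℕ) (p : ℝ × ℝ) : ℝ :=
  a * ∑ k ∈ range n, term M k p + B * term M n p

theorem continuous_term (M : ℝ) (n : ℕ) : Continuous (term M n) := by
  unfold term; fun_prop

theorem continuous_bound (a B M : ℝ) (n : ℕ) : Continuous (bound a B M n) := by
  have := continuous_term M
  unfold bound; fun_prop

theorem mul_rectIntegral_term (M : ℝ) (n : ℕ) (t x : ℝ) :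
    M * rectIntegral (term M n) t x = term M (n + 1) (t, x) := by
  have h (s α : ℝ) : term M n (s, α) = M ^ n / (n ! : ℝ) ^ 2 * s ^ n * α ^ n := by
    simp only [term]; ring
  simp only [rectIntegral, h, intervalIntegral.integral_const_mul,
    intervalIntegral.integral_mul_const, integral_pow]
  simp only [term, factorial_succ]
  push_cast
  field_simp
  ring

theorem term_zero (M : ℝ) (p : ℝ × ℝ) : term M 0 p = 1 := by
  simp [term]

theorem add_mul_rectIntegral_bound (a B M : ℝ) (n : ℕ) (t x : ℝ) :
    a + M * rectIntegral (bound a B M n) t x = bound a B M (n + 1) (t, x) := by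
  have hsum : Continuous fun p => ∑ k ∈ range n, term M k p :=
    continuous_finsetSum _ fun k _ => continuous_term M k
  unfold bound
  rw [rectIntegral.add (hsum.const_mul a) ((continuous_term M n).const_mul B),
    rectIntegral.const_mul, rectIntegral.const_mul,
    rectIntegral.finsetSum _ fun k _ => continuous_term M k, sum_range_succ', term_zero,
    ← mul_rectIntegral_term M n]
  simp only [← mul_rectIntegral_term, ← mul_sum]
  ring

theorem le_bound {w : ℝ × ℝ → ℝ} (hw : Continuous w) {T X a M B : ℝ} (hM : 0 ≤ M)
    (hB : ∀ p ∈ Icc 0 T ×ˢ Icc 0 X, w p ≤ B)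
    (h : ∀ p ∈ Icc 0 T ×ˢ Icc 0 X, w p ≤ a + M * rectIntegral w p.1 p.2) (n : ℕ) :
    ∀ p ∈ Icc 0 T ×ˢ Icc 0 X, w p ≤ bound a B M n p := by
  induction n with
  | zero => simpa [bound, term_zero] using hB
  | succ n ih =>
    rintro ⟨t, x⟩ ⟨ht, hx⟩
    have hsub : Icc 0 t ×ˢ Icc 0 x ⊆ Icc 0 T ×ˢ Icc 0 X :=
      prod_mono (Icc_subset_Icc_right ht.2) (Icc_subset_Icc_right hx.2)
    calc w (t, x) ≤ a + M * rectIntegral w t x := h _ ⟨ht, hx⟩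
      _ ≤ a + M * rectIntegral (bound a B M n) t x := by
        gcongr
        exact rectIntegral.mono hw (continuous_bound a B M n) ht.1 hx.1 fun q hq =>
          ih q (hsub hq)
      _ = bound a B M (n + 1) (t, x) := add_mul_rectIntegral_bound a B M n t x

theorem summable_term (M : ℝ) (p : ℝ × ℝ) : Summable fun n => term M n p := by
  refine .of_norm_bounded (Real.summable_pow_div_factorial |M * p.1 * p.2|) fun n => ?_
  have h1 : (1 : ℝ) ≤ n ! := mod_cast n.factorial_pos
  rw [term, norm_div, norm_pow, norm_pow, Real.norm_eq_abs, norm_natCast]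
  gcongr
  nlinarith

theorem tendsto_bound (a B M : ℝ) (p : ℝ × ℝ) :
    Tendsto (fun n => bound a B M n p) atTop (𝓝 (a * ∑' n, term M n p)) := by
  simpa only [bound, mul_zero, add_zero] using
    ((summable_term M p).hasSum.tendsto_sum_nat.const_mul a).add
      ((summable_term M p).tendsto_atTop_zero.const_mul B)

theorem le_mul_tsum_term {w : ℝ × ℝ → ℝ} (hw : Continuous w) {T X a M B : ℝ} (hM : 0 ≤ M)
    (hB : ∀ p ∈ Icc 0 T ×ˢ Icc 0 X, w p ≤ B)
    (h : ∀ p ∈ Icc 0 T ×ˢ Icc 0 X, w p ≤ a + M * rectIntegral w p.1 p.2) :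
    ∀ p ∈ Icc 0 T ×ˢ Icc 0 X, w p ≤ a * ∑' n, term M n p := fun p hp =>
  ge_of_tendsto' (tendsto_bound a B M p) fun n => le_bound hw hM hB h n p hp

end TwoParamGronwall

theorem exists_continuous_eqOn_Icc_prod_Icc {T X : ℝ} (hT : 0 ≤ T) (hX : 0 ≤ X)
    {v : ℝ × ℝ → ℝ} (hv : ContinuousOn v (Icc 0 T ×ˢ Icc 0 X)) :
    ∃ w : ℝ × ℝ → ℝ, Continuous w ∧ EqOn w v (Icc 0 T ×ˢ Icc 0 X) := by
  refine ⟨fun p => v (projIcc 0 T hT p.1, projIcc 0 X hX p.2), ?_, ?_⟩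
  · exact hv.comp_continuous (by fun_prop) fun p =>
      ⟨(projIcc 0 T hT p.1).2, (projIcc 0 X hX p.2).2⟩
  · rintro ⟨t, x⟩ ⟨ht, hx⟩
    simp [projIcc_of_mem hT ht, projIcc_of_mem hX hx]

theorem two_parameter_gronwall_general
    (T X a M : ℝ) (hT : 0 < T) (hX : 0 < X) (hM : 0 ≤ M)
    (v : ℝ × ℝ → ℝ)
    (hcont : ContinuousOn v (Set.Icc 0 T ×ˢ Set.Icc 0 X))
    (hineq : ∀ t x : ℝ, t ∈ Set.Icc (0:ℝ) T → x ∈ Set.Icc (0:ℝ) X →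
      v (t, x) ≤ a + M * ∫ s in (0:ℝ)..t, ∫ α in (0:ℝ)..x, v (s, α)) :
    ∀ t x : ℝ, t ∈ Set.Icc (0:ℝ) T → x ∈ Set.Icc (0:ℝ) X →
      v (t, x) ≤ a * ∑' n : ℕ, (M * t * x) ^ n / (n.factorial : ℝ) ^ 2 := by
  obtain ⟨w, hw, hwv⟩ := exists_continuous_eqOn_Icc_prod_Icc hT.le hX.le hcont
  obtain ⟨B, hB⟩ := (isCompact_Icc.prod isCompact_Icc).exists_bound_of_continuousOn hcont
  have hwB : ∀ p ∈ Icc 0 T ×ˢ Icc 0 X, w p ≤ B := fun p hp =>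
    hwv hp ▸ (le_abs_self _).trans (hB p hp)
  have hw_ineq : ∀ p ∈ Icc 0 T ×ˢ Icc 0 X, w p ≤ a + M * rectIntegral w p.1 p.2 := by
    rintro ⟨t, x⟩ ⟨ht, hx⟩
    rw [hwv ⟨ht, hx⟩, rectIntegral.congr ht.1 hx.1 fun q hq =>
      hwv (prod_mono (Icc_subset_Icc_right ht.2) (Icc_subset_Icc_right hx.2) hq)]
    exact hineq t x ht hx
  intro t x ht hx
  rw [← hwv ⟨ht, hx⟩]
  exact TwoParamGronwall.le_mul_tsum_term hw hM hwB hw_ineq (t, x) ⟨ht, hx⟩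

/-- Two-parameter Gronwall inequality: if a continuous nonnegative `v` on
`[0,T] × [0,X]` satisfies `v(t,x) ≤ a + M ∫₀ᵗ∫₀ˣ v(s,α) dα ds`, then
`v(t,x) ≤ a · Σₙ (M·t·x)ⁿ/(n!)²`. -/
theorem two_parameter_gronwall
    (T X a M : ℝ) (hT : 0 < T) (hX : 0 < X) (ha : 0 ≤ a) (hM : 0 ≤ M)
    (v : ℝ × ℝ → ℝ)
    (hcont : ContinuousOn v (Set.Icc 0 T ×ˢ Set.Icc 0 X))
    (hnonneg : ∀ p ∈ Set.Icc (0:ℝ) T ×ˢ Set.Icc (0:ℝ) X, 0 ≤ v p)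
    (hineq : ∀ t x : ℝ, t ∈ Set.Icc (0:ℝ) T → x ∈ Set.Icc (0:ℝ) X →
      v (t, x) ≤ a + M * ∫ s in (0:ℝ)..t, ∫ α in (0:ℝ)..x, v (s, α)) :
    ∀ t x : ℝ, t ∈ Set.Icc (0:ℝ) T → x ∈ Set.Icc (0:ℝ) X →
      v (t, x) ≤ a * ∑' n : ℕ, (M * t * x) ^ n / (n.factorial : ℝ) ^ 2 :=
  two_parameter_gronwall_general T X a M hT hX hM v hcont hineq
end

section
/- Let h : ℝ≥0 × ℝ≥0 → ℝ be continuous and bounded, let y₀ ∈ ℝ, and let y(t,x) := y₀ · Σ_{n=0}^∞ Jₙh(t,x). Then y satisfies the boundary conditions y(0,x) = y(t,0) = y₀ for all t, x ≥ 0, and y solves the hyperbolic PDE ∂²y/∂t∂x = h·y in the following sense: for every (t,x) with t, x > 0, the partial derivative ∂y/∂x(t,x) exists, and the map t' ↦ ∂y/∂x(t',x) is differentiable at t with derivative equal to h(t,x) · y(t,x). -/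
/-!
On `[0,t] × [0,x]` one has `|Jₙh| ≤ Mⁿ (tⁿ/n!) (xⁿ/n!)`: integrating the bound for `Jₙh` against
`|h| ≤ M` raises each factor to the next power. This majorant is summable and monotone in `(t, x)`,
so `Σ Jₙh` may be differentiated term by term, first in `x` and then in `t`. By Fubini and the
fundamental theorem of calculus, `∂ₓ J_{n+1}h(t,x) = ∫₀ᵗ h(s,x) Jₙh(s,x) ds`, whose `t`-derivative
is `h(t,x) Jₙh(t,x)`; summing over `n` gives `∂ₜ∂ₓ y = h y`.
-/

open MeasureTheory intervalIntegral

open Set Filter Topology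
open scoped Nat

section IteratedIntegral

variable {f : ℝ × ℝ → ℝ}

theorem continuous_integral_integral (hf : Continuous f) :
    Continuous fun p : ℝ × ℝ => ∫ s in (0:ℝ)..p.1, ∫ a in (0:ℝ)..p.2, f (s, a) := by
  have hinner : Continuous fun q : (ℝ × ℝ) × ℝ => ∫ a in (0:ℝ)..q.1.2, f (q.2, a) :=
    continuous_parametric_intervalIntegral_of_continuous (by fun_prop) (by fun_prop)
  exact continuous_parametric_intervalIntegral_of_continuous hinner continuous_fst

theorem integral_integral_comm_of_continuous (hf : Continuous f) {t x : ℝ} (ht : 0 ≤ t)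
    (hx : 0 ≤ x) :
    ∫ s in (0:ℝ)..t, ∫ a in (0:ℝ)..x, f (s, a) = ∫ a in (0:ℝ)..x, ∫ s in (0:ℝ)..t, f (s, a) := by
  simp only [integral_of_le ht, integral_of_le hx]
  refine integral_integral_swap ?_
  rw [Measure.prod_restrict, ← Measure.volume_eq_prod]
  exact (hf.continuousOn.integrableOn_compact (isCompact_Icc.prod isCompact_Icc)).mono_set
    (prod_mono Ioc_subset_Icc_self Ioc_subset_Icc_self)

theorem hasDerivAt_integral_integral_right (hf : Continuous f) {t x : ℝ} (ht : 0 ≤ t)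
    (hx : 0 < x) :
    HasDerivAt (fun z => ∫ s in (0:ℝ)..t, ∫ a in (0:ℝ)..z, f (s, a))
      (∫ s in (0:ℝ)..t, f (s, x)) x := by
  have hg : Continuous fun a => ∫ s in (0:ℝ)..t, f (s, a) :=
    continuous_parametric_intervalIntegral_of_continuous' (by fun_prop) _ _
  refine (hg.integral_hasStrictDerivAt 0 x).hasDerivAt.congr_of_eventuallyEq ?_
  filter_upwards [Ioi_mem_nhds hx] with z hz
  exact integral_integral_comm_of_continuous hf ht hz.le

theorem norm_integral_integral_le_mul {g k : ℝ → ℝ} {t x : ℝ} (ht : 0 ≤ t) (hx : 0 ≤ x)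
    (hg : IntervalIntegrable g volume 0 t) (hk : IntervalIntegrable k volume 0 x)
    (hfgk : ∀ s ∈ Ioc 0 t, ∀ a ∈ Ioc 0 x, ‖f (s, a)‖ ≤ g s * k a) :
    ‖∫ s in (0:ℝ)..t, ∫ a in (0:ℝ)..x, f (s, a)‖ ≤
      (∫ s in (0:ℝ)..t, g s) * ∫ a in (0:ℝ)..x, k a := by
  rw [← intervalIntegral.integral_mul_const]
  refine norm_integral_le_of_norm_le ht (ae_of_all _ fun s hs => ?_) (hg.mul_const _)
  rw [← intervalIntegral.integral_const_mul]
  exact norm_integral_le_of_norm_le hx (ae_of_all _ fun a ha => hfgk s hs a ha) (hk.const_mul _)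

end IteratedIntegral

theorem integral_pow_div_factorial (n : ℕ) (t : ℝ) :
    ∫ s in (0:ℝ)..t, s ^ n / n ! = t ^ (n + 1) / (n + 1)! := by
  rw [intervalIntegral.integral_div, integral_pow, Nat.factorial_succ]
  push_cast
  field_simp
  ring

noncomputable def volterraMajorant (M t x : ℝ) (n : ℕ) : ℝ := M ^ n * (t ^ n / n !) * (x ^ n / n !)

theorem volterraMajorant_mono {M s t a x : ℝ} (hM : 0 ≤ M) (hs : 0 ≤ s) (hst : s ≤ t)
    (ha : 0 ≤ a) (hax : a ≤ x) (n : ℕ) :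
    volterraMajorant M s a n ≤ volterraMajorant M t x n := by
  have ht : 0 ≤ t := hs.trans hst
  unfold volterraMajorant
  gcongr

theorem summable_volterraMajorant (M t x : ℝ) : Summable (volterraMajorant M t x) := by
  refine .of_norm_bounded ((Real.summable_pow_div_factorial (M * t)).abs.mul_right
    (Real.exp |x|)) fun n => ?_
  rw [volterraMajorant, ← mul_div_assoc (M ^ n), ← mul_pow, Real.norm_eq_abs, abs_mul]
  gcongr
  rw [abs_div, abs_pow, Nat.abs_cast]
  exact Real.pow_div_factorial_le_exp _ (abs_nonneg x) n

section Volterra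

variable {H : ℝ × ℝ → ℝ} {M : ℝ}

theorem J_succ_apply (H : ℝ × ℝ → ℝ) (n : ℕ) (p : ℝ × ℝ) :
    J H (n + 1) p = ∫ s in (0:ℝ)..p.1, ∫ a in (0:ℝ)..p.2, H (s, a) * J H n (s, a) :=
  rfl

theorem tsum_J_eq_one {p : ℝ × ℝ} (hp : ∀ n, J H (n + 1) p = 0) : ∑' n, J H n p = 1 := by
  rw [tsum_eq_single 0 fun n hn => ?_]
  · rfl
  · obtain ⟨m, rfl⟩ := Nat.exists_eq_succ_of_ne_zero hn
    exact hp m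

theorem J_succ_zero_left (H : ℝ × ℝ → ℝ) (n : ℕ) (x : ℝ) : J H (n + 1) (0, x) = 0 :=
  integral_same

theorem J_succ_zero_right (H : ℝ × ℝ → ℝ) (n : ℕ) (t : ℝ) : J H (n + 1) (t, 0) = 0 := by
  simp [J_succ_apply]

theorem J_eq_of_eqOn {h : ℝ × ℝ → ℝ} (hhH : EqOn h H (Ici 0 ×ˢ Ici 0)) (n : ℕ) {t x : ℝ}
    (ht : 0 ≤ t) (hx : 0 ≤ x) : J h n (t, x) = J H n (t, x) := by
  induction n generalizing t x with
  | zero => rfl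
  | succ n ih =>
    rw [J_succ_apply, J_succ_apply]
    refine integral_congr fun s hs => integral_congr fun a ha => ?_
    rw [uIcc_of_le ht] at hs
    rw [uIcc_of_le hx] at ha
    rw [hhH (mk_mem_prod (mem_Ici.mpr hs.1) (mem_Ici.mpr ha.1)), ih hs.1 ha.1]

theorem continuous_J (hH : Continuous H) (n : ℕ) : Continuous (J H n) := by
  induction n with
  | zero => exact continuous_const
  | succ n ih => exact continuous_integral_integral (hH.mul ih)

theorem abs_J_le_s5 (hM : ∀ p, |H p| ≤ M) (n : ℕ) {t x : ℝ} (ht : 0 ≤ t) (hx : 0 ≤ x) :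
    |J H n (t, x)| ≤ volterraMajorant M t x n := by
  have hM0 : 0 ≤ M := (abs_nonneg _).trans (hM 0)
  induction n generalizing t x with
  | zero => simp [J, volterraMajorant]
  | succ n ih =>
    have hint : ∀ y, IntervalIntegrable (fun s : ℝ => s ^ n / n !) volume 0 y := fun y =>
      (by fun_prop : Continuous fun s : ℝ => s ^ n / n !).intervalIntegrable 0 y
    have hbound := norm_integral_integral_le_mul (f := fun p => H p * J H n p) ht hx
      ((hint t).const_mul (M ^ (n + 1))) (hint x) fun s hs a ha => by
        calc ‖H (s, a) * J H n (s, a)‖ = |H (s, a)| * |J H n (s, a)| := abs_mul _ _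
          _ ≤ M * volterraMajorant M s a n := by
            gcongr
            exacts [hM _, ih hs.1.le ha.1.le]
          _ = M ^ (n + 1) * (s ^ n / n !) * (a ^ n / n !) := by
            rw [volterraMajorant]; ring
    calc |J H (n + 1) (t, x)| ≤ _ := hbound
      _ = volterraMajorant M t x (n + 1) := by
        rw [intervalIntegral.integral_const_mul, integral_pow_div_factorial,
          integral_pow_div_factorial, volterraMajorant]

theorem summable_J (hM : ∀ p, |H p| ≤ M) {t x : ℝ} (ht : 0 ≤ t) (hx : 0 ≤ x) :
    Summable fun n => J H n (t, x) :=
  .of_norm_bounded (summable_volterraMajorant M t x) fun n => abs_J_le_s5 hM n ht hx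

theorem norm_mul_J_le (hM : ∀ p, |H p| ≤ M) (n : ℕ) {s t a x : ℝ} (hs : 0 ≤ s) (hst : s ≤ t)
    (ha : 0 ≤ a) (hax : a ≤ x) :
    ‖H (s, a) * J H n (s, a)‖ ≤ M * volterraMajorant M t x n := by
  have hM0 : 0 ≤ M := (abs_nonneg _).trans (hM 0)
  rw [norm_mul]
  gcongr
  exacts [hM _, (abs_J_le_s5 hM n hs ha).trans (volterraMajorant_mono hM0 hs hst ha hax n)]

theorem norm_integral_mul_J_le (hM : ∀ p, |H p| ≤ M) (n : ℕ) {t a x : ℝ} (ht : 0 ≤ t)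
    (ha : 0 ≤ a) (hax : a ≤ x) :
    ‖∫ s in (0:ℝ)..t, H (s, a) * J H n (s, a)‖ ≤ M * volterraMajorant M t x n * t := by
  refine (intervalIntegral.norm_integral_le_of_norm_le_const fun s hs => ?_).trans_eq
    (by rw [sub_zero, abs_of_nonneg ht])
  rw [uIoc_of_le ht] at hs
  exact norm_mul_J_le hM n hs.1.le hs.2 ha hax

theorem hasDerivAt_tsum_J_right (hH : Continuous H) (hM : ∀ p, |H p| ≤ M) {t x : ℝ}
    (ht : 0 ≤ t) (hx : 0 < x) :
    HasDerivAt (fun z => ∑' n, J H n (t, z))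
      (∑' n, ∫ s in (0:ℝ)..t, H (s, x) * J H n (s, x)) x := by
  have hsucc : HasDerivAt (fun z => ∑' n, J H (n + 1) (t, z))
      (∑' n, ∫ s in (0:ℝ)..t, H (s, x) * J H n (s, x)) x :=
    hasDerivAt_tsum_of_isPreconnected
      ((summable_volterraMajorant M t (x + 1)).mul_left M |>.mul_right t)
      isOpen_Ioo isPreconnected_Ioo
      (fun n z hz => hasDerivAt_integral_integral_right (hH.mul (continuous_J hH n)) ht hz.1)
      (fun n z hz => norm_integral_mul_J_le hM n ht hz.1.le hz.2.le)
      (⟨hx, lt_add_one x⟩ : x ∈ Ioo 0 (x + 1))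
      ((summable_nat_add_iff 1).mpr (summable_J hM ht hx.le)) ⟨hx, lt_add_one x⟩
  refine (hsucc.const_add 1).congr_of_eventuallyEq ?_
  filter_upwards [Ioi_mem_nhds hx] with z hz
  exact (summable_J hM ht (le_of_lt hz)).tsum_eq_zero_add

theorem hasDerivAt_tsum_integral_mul_J (hH : Continuous H) (hM : ∀ p, |H p| ≤ M) {t x : ℝ}
    (ht : 0 < t) (hx : 0 ≤ x) :
    HasDerivAt (fun t' => ∑' n, ∫ s in (0:ℝ)..t', H (s, x) * J H n (s, x))
      (H (t, x) * ∑' n, J H n (t, x)) t := by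
  have hcont : ∀ n, Continuous fun s => H (s, x) * J H n (s, x) := fun n =>
    (hH.mul (continuous_J hH n)).comp (by fun_prop)
  rw [← tsum_mul_left]
  exact hasDerivAt_tsum_of_isPreconnected ((summable_volterraMajorant M (t + 1) x).mul_left M)
    isOpen_Ioo isPreconnected_Ioo
    (fun n t' _ => ((hcont n).integral_hasStrictDerivAt 0 t').hasDerivAt)
    (fun n t' ht' => norm_mul_J_le hM n ht'.1.le ht'.2.le hx le_rfl)
    (⟨ht, lt_add_one t⟩ : t ∈ Ioo 0 (t + 1))
    (.of_norm_bounded ((summable_volterraMajorant M t x).mul_left M |>.mul_right t)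
      fun n => norm_integral_mul_J_le hM n ht.le hx le_rfl)
    ⟨ht, lt_add_one t⟩

end Volterra

/-- For continuous bounded `h`, the function `y(t,x) := y₀ · Σₙ Jₙh(t,x)` satisfies the
boundary conditions `y(0,x) = y(t,0) = y₀` and solves the hyperbolic PDE
`∂²y/∂t∂x = h·y`: for `t, x > 0` the partial derivative `∂y/∂x(t,x)` exists, and
`t' ↦ ∂y/∂x(t',x)` is differentiable at `t` with derivative `h(t,x)·y(t,x)`. -/
theorem volterra_series_solves_pde
    (h : ℝ × ℝ → ℝ) (M : ℝ)
    (hcont : ContinuousOn h (Set.Ici (0:ℝ) ×ˢ Set.Ici (0:ℝ)))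
    (hbd : ∀ s a : ℝ, 0 ≤ s → 0 ≤ a → |h (s, a)| ≤ M) (y₀ : ℝ) :
    (∀ x : ℝ, 0 ≤ x → y₀ * ∑' n : ℕ, J h n (0, x) = y₀) ∧
    (∀ t : ℝ, 0 ≤ t → y₀ * ∑' n : ℕ, J h n (t, 0) = y₀) ∧
    (∀ t x : ℝ, 0 < t → 0 < x →
      DifferentiableAt ℝ (fun x' : ℝ => y₀ * ∑' n : ℕ, J h n (t, x')) x ∧
      HasDerivAt (fun t' : ℝ => deriv (fun x' : ℝ => y₀ * ∑' n : ℕ, J h n (t', x')) x)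
        (h (t, x) * (y₀ * ∑' n : ℕ, J h n (t, x))) t) := by
  refine ⟨fun x _ => by rw [tsum_J_eq_one (J_succ_zero_left h · x), mul_one],
    fun t _ => by rw [tsum_J_eq_one (J_succ_zero_right h · t), mul_one], fun t x ht hx => ?_⟩
  -- `Jₙh` only samples `h` on the quadrant, where `h` agrees with this continuous extension.
  set H : ℝ × ℝ → ℝ := fun p => h (max p.1 0, max p.2 0)
  have hH : Continuous H := hcont.comp_continuous (by fun_prop) fun _ =>
    ⟨mem_Ici.mpr (le_max_right _ _), mem_Ici.mpr (le_max_right _ _)⟩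
  have hHM : ∀ p, |H p| ≤ M := fun p => hbd _ _ (le_max_right _ _) (le_max_right _ _)
  have hhH : EqOn h H (Ici 0 ×ˢ Ici 0) := fun p hp => by
    simp only [H, max_eq_left (mem_Ici.mp hp.1), max_eq_left (mem_Ici.mp hp.2)]
  have hsum : ∀ {t' x'}, 0 ≤ t' → 0 ≤ x' → ∑' n, J h n (t', x') = ∑' n, J H n (t', x') :=
    fun ht' hx' => tsum_congr fun n => J_eq_of_eqOn hhH n ht' hx'
  have hdx : ∀ t' > 0, HasDerivAt (fun x' => y₀ * ∑' n, J h n (t', x'))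
      (y₀ * ∑' n, ∫ s in (0:ℝ)..t', H (s, x) * J H n (s, x)) x := fun t' ht' =>
    ((hasDerivAt_tsum_J_right hH hHM ht'.le hx).const_mul y₀).congr_of_eventuallyEq <| by
      filter_upwards [Ioi_mem_nhds hx] with x' hx' using by rw [hsum ht'.le (le_of_lt hx')]
  refine ⟨(hdx t ht).differentiableAt, ?_⟩
  rw [hsum ht.le hx.le, hhH (mk_mem_prod (mem_Ici.mpr ht.le) (mem_Ici.mpr hx.le)), mul_left_comm]
  refine ((hasDerivAt_tsum_integral_mul_J hH hHM ht hx.le).const_mul y₀).congr_of_eventuallyEq ?_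
  filter_upwards [Ioi_mem_nhds ht] with t' ht' using (hdx t' ht').deriv
end

section
/- Let F : ℝ≥0 × ℝ≥0 → ℝ be continuous and bounded, let m₀ ∈ ℝ, and let m : ℝ≥0 × ℝ≥0 → ℝ be a continuous function satisfying m(t,x) = m₀ + ∫₀ᵗ∫₀ˣ F(s,a) · m(s,a) da ds for all t, x ≥ 0. Then for every (t,x) with t, x > 0, the mixed second partial derivative of m² exists at (t,x) and equals ∂²(m²)/∂t∂x (t,x) = 2·F(t,x)·m(t,x)² + 2·(∫₀ˣ F(t,a)·m(t,a) da)·(∫₀ᵗ F(s,x)·m(s,x) ds). -/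
/-!
Extend `F·m` from the closed quadrant to a continuous function `G` on the plane. On the quadrant
`m = m₀ + Φ` with `Φ(t,x) = ∫₀ᵗ∫₀ˣ G`, and by the fundamental theorem of calculus (with Fubini for
the derivative in `x`) `∂ₓΦ(t,x) = ∫₀ᵗ G(s,x) ds`, `∂ₜΦ(t,x) = ∫₀ˣ G(t,a) da` and
`∂ₜ∂ₓΦ = G`. Hence `∂ₜ∂ₓ(m²) = ∂ₜ(2 m ∂ₓΦ) = 2 ∂ₜΦ ∂ₓΦ + 2 m G`, and `m G = F m²`.
-/

open MeasureTheory intervalIntegral Set Filter Topology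

section DoubleIntegral

variable {E : Type*} [NormedAddCommGroup E] [NormedSpace ℝ E]

theorem intervalIntegral_congr_of_eqOn_Ici {f g : ℝ → E} {a b : ℝ} (h : EqOn f g (Ici a))
    (hab : a ≤ b) : ∫ u in a..b, f u = ∫ u in a..b, g u :=
  integral_congr fun _ hu => h (uIcc_of_le hab ▸ hu).1

variable [CompleteSpace E] {G : ℝ × ℝ → E}

theorem hasDerivAt_intervalIntegral_intervalIntegral_left (hG : Continuous G) (a b x t : ℝ) :
    HasDerivAt (fun t' => ∫ s in a..t', ∫ u in b..x, G (s, u)) (∫ u in b..x, G (t, u)) t :=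
  (continuous_parametric_intervalIntegral_of_continuous' (f := fun s u => G (s, u)) hG b x
    |>.integral_hasStrictDerivAt a t).hasDerivAt

theorem hasDerivAt_intervalIntegral_intervalIntegral_right (hG : Continuous G) (a b t x : ℝ) :
    HasDerivAt (fun x' => ∫ s in a..t, ∫ u in b..x', G (s, u)) (∫ s in a..t, G (s, x)) x := by
  have hswap : ∀ x', ∫ s in a..t, ∫ u in b..x', G (s, u) = ∫ u in b..x', ∫ s in a..t, G (s, u) :=
    fun x' => intervalIntegral_intervalIntegral_swap <|
      (hG.continuousOn.integrableOn_compact (isCompact_uIcc.prod isCompact_uIcc)).mono_set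
        (prod_mono uIoc_subset_uIcc uIoc_subset_uIcc)
  simp_rw [hswap]
  exact (continuous_parametric_intervalIntegral_of_continuous' (f := fun u s => G (s, u))
    (hG.comp continuous_swap) a t |>.integral_hasStrictDerivAt b x).hasDerivAt

end DoubleIntegral

theorem hasDerivAt_sq_add_intervalIntegral_intervalIntegral_right {G : ℝ × ℝ → ℝ}
    (hG : Continuous G) (c a b t x : ℝ) :
    HasDerivAt (fun x' => (c + ∫ s in a..t, ∫ u in b..x', G (s, u)) ^ 2)
      (2 * (c + ∫ s in a..t, ∫ u in b..x, G (s, u)) * ∫ s in a..t, G (s, x)) x :=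
  (((hasDerivAt_intervalIntegral_intervalIntegral_right hG a b t x).const_add c).fun_pow
    2).congr_deriv (by push_cast; ring)

theorem hasDerivAt_deriv_sq_add_intervalIntegral_intervalIntegral {G : ℝ × ℝ → ℝ}
    (hG : Continuous G) (c a b t x : ℝ) :
    HasDerivAt (fun t' => deriv (fun x' => (c + ∫ s in a..t', ∫ u in b..x', G (s, u)) ^ 2) x)
      (2 * G (t, x) * (c + ∫ s in a..t, ∫ u in b..x, G (s, u))
        + 2 * (∫ u in b..x, G (t, u)) * ∫ s in a..t, G (s, x)) t := by
  simp_rw [(hasDerivAt_sq_add_intervalIntegral_intervalIntegral_right hG c a b _ x).deriv]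
  have hslice : HasDerivAt (fun t' => ∫ s in a..t', G (s, x)) (G (t, x)) t :=
    ((hG.comp (by fun_prop)).integral_hasStrictDerivAt a t).hasDerivAt
  exact ((((hasDerivAt_intervalIntegral_intervalIntegral_left hG a b x t).const_add c).const_mul
    2).fun_mul hslice).congr_deriv (by ring)

def quadrantProj (q : ℝ × ℝ) : ℝ × ℝ := (max q.1 0, max q.2 0)

theorem continuous_quadrantProj : Continuous quadrantProj := by
  unfold quadrantProj; fun_prop

theorem quadrantProj_mem (q : ℝ × ℝ) : quadrantProj q ∈ Ici (0 : ℝ) ×ˢ Ici (0 : ℝ) :=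
  ⟨mem_Ici.mpr (le_max_right _ _), mem_Ici.mpr (le_max_right _ _)⟩

theorem quadrantProj_of_mem {q : ℝ × ℝ} (hq : q ∈ Ici (0 : ℝ) ×ˢ Ici (0 : ℝ)) :
    quadrantProj q = q := by
  simp only [quadrantProj, max_eq_left (mem_Ici.mp hq.1), max_eq_left (mem_Ici.mp hq.2)]

theorem mixed_partial_of_square_of_volterra_solution_general
    (F : ℝ × ℝ → ℝ)
    (hFcont : ContinuousOn F (Set.Ici (0:ℝ) ×ˢ Set.Ici (0:ℝ)))
    (m₀ : ℝ) (m : ℝ × ℝ → ℝ)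
    (hmcont : ContinuousOn m (Set.Ici (0:ℝ) ×ˢ Set.Ici (0:ℝ)))
    (hm : ∀ t x : ℝ, 0 ≤ t → 0 ≤ x →
      m (t, x) = m₀ + ∫ s in (0:ℝ)..t, ∫ a in (0:ℝ)..x, F (s, a) * m (s, a)) :
    ∀ t x : ℝ, 0 < t → 0 < x →
      DifferentiableAt ℝ (fun x' : ℝ => (m (t, x')) ^ 2) x ∧
      HasDerivAt (fun t' : ℝ => deriv (fun x' : ℝ => (m (t', x')) ^ 2) x)
        (2 * F (t, x) * (m (t, x)) ^ 2
          + 2 * (∫ a in (0:ℝ)..x, F (t, a) * m (t, a))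
              * (∫ s in (0:ℝ)..t, F (s, x) * m (s, x))) t := by
  intro t x ht hx
  set G : ℝ × ℝ → ℝ := fun q => F (quadrantProj q) * m (quadrantProj q)
  have hG : Continuous G :=
    (hFcont.mul hmcont).comp_continuous continuous_quadrantProj quadrantProj_mem
  have hGeq : ∀ s a : ℝ, 0 ≤ s → 0 ≤ a → F (s, a) * m (s, a) = G (s, a) := fun s a hs ha => by
    simp only [G, quadrantProj_of_mem (q := (s, a)) ⟨hs, ha⟩]
  have hmG : ∀ t' x' : ℝ, 0 ≤ t' → 0 ≤ x' →
      m (t', x') = m₀ + ∫ s in (0:ℝ)..t', ∫ a in (0:ℝ)..x', G (s, a) := fun t' x' ht' hx' => by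
    rw [hm t' x' ht' hx', intervalIntegral_congr_of_eqOn_Ici
      (fun s hs => intervalIntegral_congr_of_eqOn_Ici (fun a ha => hGeq s a hs ha) hx') ht']
  have hslice : ∀ t', 0 < t' → (fun x' => m (t', x') ^ 2) =ᶠ[𝓝 x]
      fun x' => (m₀ + ∫ s in (0:ℝ)..t', ∫ a in (0:ℝ)..x', G (s, a)) ^ 2 := fun t' ht' => by
    filter_upwards [Ioi_mem_nhds hx] with x' hx'
    rw [hmG t' x' ht'.le hx'.le]
  refine ⟨(hasDerivAt_sq_add_intervalIntegral_intervalIntegral_right hG m₀ 0 0 t x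
    ).differentiableAt.congr_of_eventuallyEq (hslice t ht), ?_⟩
  have hG' := hasDerivAt_deriv_sq_add_intervalIntegral_intervalIntegral hG m₀ 0 0 t x
  rw [← hmG t x ht.le hx.le, ← hGeq t x ht.le hx.le,
    ← intervalIntegral_congr_of_eqOn_Ici (fun a ha => hGeq t a ht.le ha) hx.le,
    ← intervalIntegral_congr_of_eqOn_Ici (fun s hs => hGeq s x hs hx.le) ht.le] at hG'
  refine (hG'.congr_of_eventuallyEq ?_).congr_deriv (by ring)
  filter_upwards [Ioi_mem_nhds ht] with t' ht'
  exact (hslice t' ht').deriv_eq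

/-- If `F` is continuous and bounded on the nonnegative quadrant and the continuous
function `m` satisfies `m(t,x) = m₀ + ∫₀ᵗ∫₀ˣ F(s,a)·m(s,a) da ds`, then for `t, x > 0`
the mixed second partial derivative of `m²` exists at `(t,x)` and equals
`2·F(t,x)·m(t,x)² + 2·(∫₀ˣ F(t,a)·m(t,a) da)·(∫₀ᵗ F(s,x)·m(s,x) ds)`. -/
theorem mixed_partial_of_square_of_volterra_solution
    (F : ℝ × ℝ → ℝ) (M : ℝ)
    (hFcont : ContinuousOn F (Set.Ici (0:ℝ) ×ˢ Set.Ici (0:ℝ)))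
    (hFbd : ∀ s a : ℝ, 0 ≤ s → 0 ≤ a → |F (s, a)| ≤ M)
    (m₀ : ℝ) (m : ℝ × ℝ → ℝ)
    (hmcont : ContinuousOn m (Set.Ici (0:ℝ) ×ˢ Set.Ici (0:ℝ)))
    (hm : ∀ t x : ℝ, 0 ≤ t → 0 ≤ x →
      m (t, x) = m₀ + ∫ s in (0:ℝ)..t, ∫ a in (0:ℝ)..x, F (s, a) * m (s, a)) :
    ∀ t x : ℝ, 0 < t → 0 < x →
      DifferentiableAt ℝ (fun x' : ℝ => (m (t, x')) ^ 2) x ∧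
      HasDerivAt (fun t' : ℝ => deriv (fun x' : ℝ => (m (t', x')) ^ 2) x)
        (2 * F (t, x) * (m (t, x)) ^ 2
          + 2 * (∫ a in (0:ℝ)..x, F (t, a) * m (t, a))
              * (∫ s in (0:ℝ)..t, F (s, x) * m (s, x))) t :=
  mixed_partial_of_square_of_volterra_solution_general F hFcont m₀ m hmcont hm
end
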